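/- Fix a complex n×t matrix A, z ∈ ℂ with Im z > 0, and indices a, p ∈ {1,…,n}, b ∈ {1,…,n}, q ∈ {1,…,t}. For X ∈ ℂ^{n×t} let H = A + X and Q(X) = (HH* − z I_n)⁻¹ (which exists for every X since HH* is Hermitian positive semidefinite and Im z > 0). Then the entry Q(X)_{a,b}, viewed as a smooth function of the real and imaginary parts of the entries of X, has Wirtinger derivatives ∂Q_{a,b}/∂X_{p,q} = − Q_{a,p} [H*Q]_{q,b} and ∂Q_{a,b}/∂X̄_{p,q} = − [QH]_{a,q} Q_{p,b}, where [H*Q] = H*Q and [QH] = QH. -/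

import Mathlib

open Matrix
open scoped Matrix.Norms.L2Operator

noncomputable section

/-- Wirtinger holomorphic derivative of `F` with respect to the `(p,q)` entry. -/
def mWirtinger {n t : ℕ} (F : Matrix (Fin n) (Fin t) ℂ → ℂ)
    (X : Matrix (Fin n) (Fin t) ℂ) (p : Fin n) (q : Fin t) : ℂ :=
  (1 / 2) * (fderiv ℝ F X (Matrix.single p q 1)
    - Complex.I * fderiv ℝ F X (Matrix.single p q Complex.I))

/-- Wirtinger antiholomorphic derivative of `F` with respect to the `(p,q)` entry. -/
def mWirtingerBar {n t : ℕ} (F : Matrix (Fin n) (Fin t) ℂ → ℂ)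
    (X : Matrix (Fin n) (Fin t) ℂ) (p : Fin n) (q : Fin t) : ℂ :=
  (1 / 2) * (fderiv ℝ F X (Matrix.single p q 1)
    + Complex.I * fderiv ℝ F X (Matrix.single p q Complex.I))


/-!
With `H = A + X` and `Q = (HH* − z)⁻¹`, the real derivative of `X ↦ Q` in a direction `E` is
`−Q (EH* + HE*) Q`. In the direction `c • e_{pq}` this entry is `u c + v c̄` with
`u = −Q_{ap} (H*Q)_{qb}` and `v = −(QH)_{aq} Q_{pb}`, and the Wirtinger derivatives of such a
function of `c` are `u` and `v`. The inverse exists because `HH*` is self-adjoint, so its spectrum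
is real and does not contain `z`.
-/

namespace Matrix

section

variable {l m n o α : Type*} [Fintype m] [Fintype n] [DecidableEq m] [DecidableEq n]
  [NonUnitalNonAssocSemiring α]

theorem mul_single_mul_apply (P : Matrix l m α) (B : Matrix n o α) (i : m) (j : n) (c : α)
    (a : l) (b : o) : (P * single i j c * B) a b = P a i * c * B j b := by
  simp [mul_apply, single, ite_and]

end

section

variable {m n : Type*} [Fintype m] [Fintype n] [DecidableEq n]

theorem _root_.HasFDerivAt.matrix_apply {E : Type*} [NormedAddCommGroup E] [NormedSpace ℝ E]
    {f : E → Matrix m n ℂ} {f' : E →L[ℝ] Matrix m n ℂ} {x : E}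
    (hf : HasFDerivAt f f' x) (i : m) (j : n) :
    HasFDerivAt (fun y => f y i j)
      ((LinearMap.toContinuousLinearMap (entryLinearMap ℝ ℂ i j)).comp f') x := by
  -- elaborated before unification: the goal's topology on matrices is the product one
  have := (LinearMap.toContinuousLinearMap (entryLinearMap ℝ ℂ i j)).hasFDerivAt.comp x hf
  exact this

end

variable {m k : Type*} [Fintype m] [Fintype k]

def mulConjTransposeFDeriv (H : Matrix m k ℂ) : Matrix m k ℂ →L[ℝ] Matrix m m ℂ :=
  LinearMap.toContinuousLinearMap
    { toFun := fun E => E * Hᴴ + H * Eᴴ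
      map_add' := fun E F => by
        simp only [conjTranspose_add, Matrix.add_mul, Matrix.mul_add]
        abel
      map_smul' := fun c E => by
        simp [conjTranspose_smul, smul_add] }

@[simp]
theorem mulConjTransposeFDeriv_apply (H E : Matrix m k ℂ) :
    mulConjTransposeFDeriv H E = E * Hᴴ + H * Eᴴ := rfl

variable [DecidableEq m]

theorem isUnit_mul_conjTranspose_sub_smul_one (H : Matrix m k ℂ) {z : ℂ} (hz : z.im ≠ 0) :
    IsUnit (H * Hᴴ - z • (1 : Matrix m m ℂ)) := by
  have hsa : IsSelfAdjoint (H * Hᴴ) := (isHermitian_mul_conjTranspose_self H).isSelfAdjoint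
  have hspec : z ∉ spectrum ℂ (H * Hᴴ) := fun hmem =>
    hz (by rw [hsa.mem_spectrum_eq_re hmem]; simp)
  rw [spectrum.notMem_iff, Algebra.algebraMap_eq_smul_one] at hspec
  simpa using hspec.neg

theorem _root_.HasFDerivAt.matrix_inv {E : Type*} [NormedAddCommGroup E] [NormedSpace ℝ E]
    {f : E → Matrix m m ℂ} {f' : E →L[ℝ] Matrix m m ℂ} {x : E} (hf : HasFDerivAt f f' x)
    (hx : IsUnit (f x)) :
    HasFDerivAt (fun y => (f y)⁻¹)
      (-(ContinuousLinearMap.mulLeftRight ℝ _ (f x)⁻¹ (f x)⁻¹).comp f') x := by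
  obtain ⟨u, hu⟩ := hx
  have hinv : (f x)⁻¹ = ((u⁻¹ : (Matrix m m ℂ)ˣ) : Matrix m m ℂ) := by
    rw [← hu, coe_units_inv]
  have hring := (hu ▸ hasFDerivAt_ringInverse (𝕜 := ℝ) u).comp x hf
  simp_rw [hinv, nonsing_inv_eq_ringInverse]
  exact hring

variable [DecidableEq k]

theorem hasFDerivAt_mul_conjTranspose (H : Matrix m k ℂ) :
    HasFDerivAt (fun Y : Matrix m k ℂ => Y * Yᴴ) (mulConjTransposeFDeriv H) H := by
  refine hasFDerivAt_iff_isLittleO_nhds_zero.2 ?_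
  have hrem : (fun E : Matrix m k ℂ =>
      (H + E) * (H + E)ᴴ - H * Hᴴ - mulConjTransposeFDeriv H E) = fun E => E * Eᴴ := by
    funext E
    simp only [mulConjTransposeFDeriv_apply, conjTranspose_add, Matrix.add_mul, Matrix.mul_add]
    abel
  have hquad : (fun E : Matrix m k ℂ => E * Eᴴ) =O[nhds 0] (fun E => ‖E‖ ^ 2) :=
    Asymptotics.IsBigO.of_bound 1 <| Filter.Eventually.of_forall fun E => by
      calc ‖E * Eᴴ‖ ≤ ‖E‖ * ‖Eᴴ‖ := l2_opNorm_mul E Eᴴ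
        _ = 1 * ‖‖E‖ ^ 2‖ := by rw [l2_opNorm_conjTranspose, norm_pow, norm_norm]; ring
  rw [hrem]
  exact hquad.trans_isLittleO (Asymptotics.isLittleO_norm_pow_id one_lt_two)

theorem fderiv_resolvent_apply (A : Matrix m k ℂ) {z : ℂ} (hz : z.im ≠ 0) (a b : m)
    (X E : Matrix m k ℂ) :
    fderiv ℝ (fun Y => ((A + Y) * (A + Y)ᴴ - z • (1 : Matrix m m ℂ))⁻¹ a b) X E
      = -(((A + X) * (A + X)ᴴ - z • (1 : Matrix m m ℂ))⁻¹
          * (E * (A + X)ᴴ + (A + X) * Eᴴ)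
          * ((A + X) * (A + X)ᴴ - z • (1 : Matrix m m ℂ))⁻¹) a b := by
  have hM := (hasFDerivAt_mul_conjTranspose (A + X)).sub_const (z • (1 : Matrix m m ℂ))
  have hR := (hM.matrix_inv (isUnit_mul_conjTranspose_sub_smul_one (A + X) hz)).matrix_apply a b
  rw [((hasFDerivAt_comp_add_left A).2 hR).fderiv]
  simp

end Matrix

section Wirtinger

variable {n t : ℕ} {F : Matrix (Fin n) (Fin t) ℂ → ℂ} {X : Matrix (Fin n) (Fin t) ℂ}
  {p : Fin n} {q : Fin t} {u v : ℂ}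

theorem mWirtinger_eq_of_fderiv_single
    (h : ∀ c : ℂ, fderiv ℝ F X (Matrix.single p q c) = u * c + v * star c) :
    mWirtinger F X p q = u := by
  rw [mWirtinger, h, h, star_one, Complex.star_def, Complex.conj_I]
  linear_combination (v - u) / 2 * Complex.I_sq

theorem mWirtingerBar_eq_of_fderiv_single
    (h : ∀ c : ℂ, fderiv ℝ F X (Matrix.single p q c) = u * c + v * star c) :
    mWirtingerBar F X p q = v := by
  rw [mWirtingerBar, h, h, star_one, Complex.star_def, Complex.conj_I]
  linear_combination (u - v) / 2 * Complex.I_sq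

end Wirtinger

theorem resolvent_entry_wirtinger_derivatives
    (n t : ℕ) (A : Matrix (Fin n) (Fin t) ℂ) (z : ℂ) (hz : 0 < z.im)
    (a b p : Fin n) (q : Fin t) :
    ∀ X : Matrix (Fin n) (Fin t) ℂ,
      mWirtinger
          (fun Y => (((A + Y) * (A + Y)ᴴ
            - z • (1 : Matrix (Fin n) (Fin n) ℂ))⁻¹) a b) X p q
        = -(((A + X) * (A + X)ᴴ - z • (1 : Matrix (Fin n) (Fin n) ℂ))⁻¹ a p)
            * (((A + X)ᴴ
              * ((A + X) * (A + X)ᴴ - z • (1 : Matrix (Fin n) (Fin n) ℂ))⁻¹) q b) ∧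
      mWirtingerBar
          (fun Y => (((A + Y) * (A + Y)ᴴ
            - z • (1 : Matrix (Fin n) (Fin n) ℂ))⁻¹) a b) X p q
        = -((((A + X) * (A + X)ᴴ - z • (1 : Matrix (Fin n) (Fin n) ℂ))⁻¹
              * (A + X)) a q)
            * (((A + X) * (A + X)ᴴ - z • (1 : Matrix (Fin n) (Fin n) ℂ))⁻¹ p b) := by
  intro X
  set H := A + X
  set Q := (H * Hᴴ - z • (1 : Matrix (Fin n) (Fin n) ℂ))⁻¹
  have hderiv : ∀ c : ℂ,
      fderiv ℝ (fun Y => (((A + Y) * (A + Y)ᴴ - z • (1 : Matrix (Fin n) (Fin n) ℂ))⁻¹) a b)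
          X (Matrix.single p q c)
        = -Q a p * (Hᴴ * Q) q b * c + -(Q * H) a q * Q p b * star c := by
    intro c
    rw [Matrix.fderiv_resolvent_apply A hz.ne', Matrix.conjTranspose_single, Matrix.mul_add,
      Matrix.add_mul, ← Matrix.mul_assoc Q H, ← Matrix.mul_assoc Q (Matrix.single p q c),
      Matrix.mul_assoc (Q * Matrix.single p q c), Matrix.add_apply, Matrix.mul_single_mul_apply,
      Matrix.mul_single_mul_apply]
    ring
  exact ⟨mWirtinger_eq_of_fderiv_single hderiv, mWirtingerBar_eq_of_fderiv_single hderiv⟩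

end
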